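/- arXiv:2008.05688 — 4 statements merged into one kernel-verified Lean document; each statement's English description precedes it below -/
import Mathlib

section
/- Let A be a partially ordered set and n a natural number. If w' and w'' are two lists over A of the same length n that both arise by inserting copies of a fixed element a into the same base list w (i.e., both have w as the sublist obtained by deleting all occurrences of a), and w' ≤ w'' componentwise (w'_i ≤ w''_i in A for all i), then w' = w''. -/
/-- Erase all occurrences of the letter `a` from a word. -/
def aErase {α : Type*} [DecidableEq α] (a : α) (w : List α) : List α :=
  w.filter (· ≠ a)

/-- `w'` is an `a`-extension of `w`: it is obtained by inserting copies of `a` into `w`,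
equivalently erasing all occurrences of `a` from `w'` yields `w`. -/
def IsAExt {α : Type*} [DecidableEq α] (a : α) (w w' : List α) : Prop :=
  aErase a w' = w

/-- The induced relation `≤ₐ` on words, relative to a relation `r` on letters:
`v ≤ₐ w` iff there are `a`-extensions of `v` and `w` of equal length that are
related componentwise (componentwise relation of equal-length lists is `List.Forall₂ r`). -/
def LeExt {α : Type*} [DecidableEq α] (r : α → α → Prop) (a : α) (v w : List α) : Prop :=
  ∃ v' w', IsAExt a v v' ∧ IsAExt a w w' ∧ List.Forall₂ r v' w'

/-!
Scan the two extensions from the left, keeping track of the letters that the erasure of one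
side has already produced but the other has not yet. A position where the extensions differ
has `x ≤ y` with exactly one of them equal to `a`, so the side that gets ahead produces a
letter `> a` (when `x = a`) or `< a` (when `y = a`), and comparability keeps every letter
pending on the `u`-side above `a` and every letter pending on the `v`-side below `a`. Such
letters can never be matched against each other, so nothing may ever become pending, and the
two extensions agree letter by letter.
-/

section

variable {α : Type*} [DecidableEq α]

@[simp]
theorem aErase_nil (a : α) : aErase a [] = [] := rfl

@[simp]
theorem aErase_cons_self (a : α) (u : List α) : aErase a (a :: u) = aErase a u := by
  simp [aErase]

@[simp]
theorem aErase_cons_of_ne {a x : α} (hx : x ≠ a) (u : List α) :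
    aErase a (x :: u) = x :: aErase a u := by
  simp [aErase, hx]

end

/-- `s` (resp. `t`) is the queue of letters produced by the erasure of `u` (resp. `v`) and not
yet matched by the other side. -/
theorem eq_of_forall₂_le_of_append_aErase_eq {α : Type*} [PartialOrder α] [DecidableEq α]
    {a : α} {u v : List α} (hle : List.Forall₂ (· ≤ ·) u v) :
    ∀ {s t : List α}, (∀ b ∈ s, a < b) → (∀ b ∈ t, b < a) →
      t ++ aErase a u = s ++ aErase a v → s = [] ∧ t = [] ∧ u = v := by
  induction hle with
  | nil =>
    intro s t hs ht h
    simp only [aErase_nil, List.append_nil] at h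
    subst h
    have hnil : t = [] := List.eq_nil_iff_forall_not_mem.2 fun b hb => (hs b hb).asymm (ht b hb)
    exact ⟨hnil, hnil, rfl⟩
  | @cons x y u v hxy hle ih =>
    intro s t hs ht h
    by_cases hx : x = a <;> by_cases hy : y = a
    · rw [hx, hy, aErase_cons_self, aErase_cons_self] at h
      obtain ⟨rfl, rfl, rfl⟩ := ih hs ht h
      exact ⟨rfl, rfl, by rw [hx, hy]⟩
    · rw [hx, aErase_cons_self, aErase_cons_of_ne hy, ← List.singleton_append,
        ← List.append_assoc] at h
      have hay : a < y := lt_of_le_of_ne (hx ▸ hxy) (Ne.symm hy)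
      simpa using (ih (List.forall_mem_append.2 ⟨hs, List.forall_mem_singleton.2 hay⟩) ht h).1
    · rw [hy, aErase_cons_self, aErase_cons_of_ne hx, ← List.singleton_append,
        ← List.append_assoc] at h
      have hxa : x < a := lt_of_le_of_ne (hy ▸ hxy) hx
      simpa using (ih hs (List.forall_mem_append.2 ⟨ht, List.forall_mem_singleton.2 hxa⟩) h).2.1
    · rw [aErase_cons_of_ne hx, aErase_cons_of_ne hy] at h
      rcases t with _ | ⟨t₀, t'⟩ <;> rcases s with _ | ⟨s₀, s'⟩ <;>
        simp only [List.nil_append, List.cons_append, List.cons.injEq] at h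
      · obtain ⟨rfl, h⟩ := h
        obtain ⟨-, -, rfl⟩ := ih hs ht (s := []) (t := []) h
        exact ⟨rfl, rfl, rfl⟩
      · obtain ⟨rfl, h⟩ := h
        obtain ⟨has₀, hs'⟩ := List.forall_mem_cons.1 hs
        have hs'' := List.forall_mem_append.2 ⟨hs', List.forall_mem_singleton.2 (has₀.trans_le hxy)⟩
        simpa using (ih hs'' ht (t := []) (by simpa using h)).1
      · obtain ⟨rfl, h⟩ := h
        obtain ⟨ht₀a, ht'⟩ := List.forall_mem_cons.1 ht
        have ht'' := List.forall_mem_append.2 ⟨ht', List.forall_mem_singleton.2 (hxy.trans_lt ht₀a)⟩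
        simpa using (ih hs ht'' (s := []) (by simpa using h)).2.1
      · obtain ⟨rfl, -⟩ := h
        exact absurd (hs _ (.head _)) (ht _ (.head _)).asymm

/-- Two equal-length `a`-extensions of the same word that are componentwise comparable
are equal (Lemma 2.3). -/
theorem stmt_0 {α : Type*} [PartialOrder α] [DecidableEq α] (a : α)
    (w w' w'' : List α)
    (h' : IsAExt a w w') (h'' : IsAExt a w w'')
    (hle : List.Forall₂ (· ≤ ·) w' w'') :
    w' = w'' :=
  (eq_of_forall₂_le_of_append_aErase_eq hle (s := []) (t := []) (by simp) (by simp)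
    (by simpa using h'.trans h''.symm)).2.2
end

section
/- Let A be a partial order, a ∈ A, and define ≤_a on lists over A_a = A \ {a} by: v ≤_a w iff there exist a-extensions v', w' of v, w of equal length with v' ≤ w' componentwise. Then ≤_a is antisymmetric: if v ≤_a w and w ≤_a v then v = w. -/
/-!
Weigh a letter by `+1` if it lies above `a`, by `-1` if it lies below `a`, and by `0` otherwise,
and a word by the sum of its letters' weights. Along a componentwise comparison `v' ≤ w'` of
`a`-extensions the weight of each position can only grow, and it grows strictly wherever exactly
one of the two letters is `a`; erasing `a` does not change the weight. So `v ≤ₐ w ≤ₐ v` forces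
equal weights, hence the copies of `a` sit at the same positions of `v'` and `w'`, and erasing
them gives `v ≤ w` componentwise, and symmetrically `w ≤ v`.
-/

namespace List

variable {α β M : Type*} {R : α → β → Prop} {l₁ : List α} {l₂ : List β}

theorem Forall₂.sum_map_le [AddCommMonoid M] [PartialOrder M] [IsOrderedAddMonoid M]
    {f : α → M} {g : β → M} (h : Forall₂ R l₁ l₂) (hfg : ∀ x y, R x y → f x ≤ g y) :
    (l₁.map f).sum ≤ (l₂.map g).sum :=
  Forall₂.sum_le_sum <| forall₂_map_left_iff.2 <| forall₂_map_right_iff.2 <| h.imp hfg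

theorem Forall₂.and_eq_of_sum_map_le [AddCommMonoid M] [PartialOrder M]
    [IsOrderedCancelAddMonoid M] {f : α → M} {g : β → M} (h : Forall₂ R l₁ l₂)
    (hfg : ∀ x y, R x y → f x ≤ g y) (hsum : (l₂.map g).sum ≤ (l₁.map f).sum) :
    Forall₂ (fun x y => R x y ∧ f x = g y) l₁ l₂ := by
  induction h with
  | nil => exact .nil
  | @cons x y l₁ l₂ hxy htail ih =>
    rw [map_cons, map_cons, sum_cons, sum_cons] at hsum
    have hhead := hfg x y hxy
    have htail_le := htail.sum_map_le hfg
    have htail_ge : (l₂.map g).sum ≤ (l₁.map f).sum :=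
      le_of_add_le_add_left (hsum.trans (add_le_add hhead le_rfl))
    have hhead_ge : g y ≤ f x :=
      le_of_add_le_add_right (hsum.trans (add_le_add le_rfl htail_le))
    exact .cons ⟨hxy, hhead.antisymm hhead_ge⟩ (ih htail_ge)

theorem Forall₂.antisymm [PartialOrder α] {l₁ l₂ : List α} (h₁₂ : Forall₂ (· ≤ ·) l₁ l₂)
    (h₂₁ : Forall₂ (· ≤ ·) l₂ l₁) : l₁ = l₂ := by
  induction h₁₂ with
  | nil => rfl
  | cons hxy _ ih =>
    obtain ⟨hyx, htail⟩ := forall₂_cons.1 h₂₁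
    rw [hxy.antisymm hyx, ih htail]

end List

section LetterWeight

variable {α : Type*} [PartialOrder α]

open Classical in
noncomputable def letterWeight (a x : α) : ℤ :=
  if a < x then 1 else if x < a then -1 else 0

noncomputable def wordWeight (a : α) (l : List α) : ℤ :=
  (l.map (letterWeight a)).sum

@[simp]
theorem letterWeight_self (a : α) : letterWeight a a = 0 := by
  simp [letterWeight]

theorem letterWeight_mono (a : α) {x y : α} (hxy : x ≤ y) :
    letterWeight a x ≤ letterWeight a y := by
  unfold letterWeight
  have hy : a < x → a < y := fun h => h.trans_le hxy
  have hx : y < a → x < a := hxy.trans_lt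
  split_ifs <;> simp_all

theorem eq_iff_eq_of_letterWeight_eq {a x y : α} (hxy : x ≤ y)
    (hw : letterWeight a x = letterWeight a y) : x = a ↔ y = a := by
  constructor
  · rintro rfl
    refine (hxy.lt_or_eq.resolve_left fun hlt => ?_).symm
    simp [letterWeight, hlt] at hw
  · rintro rfl
    refine hxy.lt_or_eq.resolve_left fun hlt => ?_
    simp [letterWeight, hlt, hlt.not_gt] at hw

theorem wordWeight_aErase [DecidableEq α] (a : α) (l : List α) :
    wordWeight a (aErase a l) = wordWeight a l := by
  induction l with
  | nil => rfl
  | cons x l ih =>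
    by_cases hx : x = a
    · subst hx
      simpa [wordWeight, aErase] using ih
    · simpa [wordWeight, aErase, hx] using ih

end LetterWeight

namespace LeExt

variable {α : Type*} [PartialOrder α] [DecidableEq α] {a : α} {v w : List α}

theorem wordWeight_le (h : LeExt (· ≤ ·) a v w) : wordWeight a v ≤ wordWeight a w := by
  obtain ⟨v', w', rfl, rfl, hle⟩ := h
  rw [wordWeight_aErase, wordWeight_aErase]
  exact hle.sum_map_le fun _ _ => letterWeight_mono a

theorem forall₂_le_of_wordWeight_le (h : LeExt (· ≤ ·) a v w)
    (hweight : wordWeight a w ≤ wordWeight a v) : List.Forall₂ (· ≤ ·) v w := by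
  obtain ⟨v', w', rfl, rfl, hle⟩ := h
  rw [wordWeight_aErase, wordWeight_aErase] at hweight
  have hsame := hle.and_eq_of_sum_map_le (fun _ _ => letterWeight_mono a) hweight
  refine (List.rel_filter ?_ hsame).imp fun _ _ => And.left
  rintro x y ⟨hxy, hw⟩
  simp [eq_iff_eq_of_letterWeight_eq hxy hw]

end LeExt

theorem stmt_3_general {α : Type*} [PartialOrder α] [DecidableEq α] (a : α)
    (v w : List α)
    (hvw : LeExt (· ≤ ·) a v w) (hwv : LeExt (· ≤ ·) a w v) :
    v = w :=
  (hvw.forall₂_le_of_wordWeight_le hwv.wordWeight_le).antisymm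
    (hwv.forall₂_le_of_wordWeight_le hvw.wordWeight_le)

/-- The induced relation `≤ₐ` is antisymmetric (Theorem 2.2). -/
theorem stmt_3 {α : Type*} [PartialOrder α] [DecidableEq α] (a : α)
    (v w : List α) (hv : a ∉ v) (hw : a ∉ w)
    (hvw : LeExt (· ≤ ·) a v w) (hwv : LeExt (· ≤ ·) a w v) :
    v = w :=
  stmt_3_general a v w hvw hwv
end

section
/- Let A be a partial order, a ∈ A. Any two a-extensions w', w'' of the same word w ∈ (A\{a})* that have the same length are either equal or incomparable in the componentwise order on A^n. -/
/-!
Two equal-length `a`-extensions of the same word contain the same letters with the same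
multiplicities, so they are permutations of each other. If `v ≤ w` componentwise, then for every
`t` each entry of `v` above `t` faces an entry of `w` above `t`, so `v` has at most as many
entries `≥ t` as `w`, with equality when `v` is a permutation of `w`. Taking `t = w₀` on top of
the tails forces `w₀ ≤ v₀`, hence `v₀ = w₀`, and induction on the tails gives `v = w`.
-/

namespace List

theorem Forall₂.countP_le {α β : Type*} {R : α → β → Prop} {p : α → Bool} {q : β → Bool}
    {l₁ : List α} {l₂ : List β} (h : Forall₂ R l₁ l₂) (hpq : ∀ a b, R a b → p a → q b) :
    l₁.countP p ≤ l₂.countP q := by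
  induction h with
  | nil => rfl
  | @cons a b _ _ hab _ ih =>
    have : (if p a then 1 else 0) ≤ (if q b then 1 else 0) := by
      split_ifs <;> simp_all [hpq a b hab]
    simp only [countP_cons]
    omega

theorem eq_of_forall₂_le_of_countP_eq {α : Type*} [PartialOrder α] [DecidableLE α]
    {l₁ l₂ : List α} (h : Forall₂ (· ≤ ·) l₁ l₂)
    (hc : ∀ t, l₁.countP (t ≤ ·) = l₂.countP (t ≤ ·)) : l₁ = l₂ := by
  induction h with
  | nil => rfl
  | @cons x y l₁ l₂ hxy htl ih =>
    have htl_le : ∀ t, l₁.countP (t ≤ ·) ≤ l₂.countP (t ≤ ·) := fun t =>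
      htl.countP_le fun _ _ hab hta => decide_eq_true (le_trans (of_decide_eq_true hta) hab)
    have hyx : y ≤ x := by
      by_contra hyx
      have hcy := hc y
      simp only [countP_cons, le_refl, hyx, decide_true, decide_false, Bool.false_eq_true,
        if_false, if_true] at hcy
      have := htl_le y
      omega
    obtain rfl : x = y := le_antisymm hxy hyx
    rw [ih fun t => by simpa [countP_cons] using hc t]

theorem Perm.eq_of_forall₂_le {α : Type*} [PartialOrder α] {l₁ l₂ : List α} (hp : l₁ ~ l₂)
    (h : Forall₂ (· ≤ ·) l₁ l₂) : l₁ = l₂ := by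
  classical
  exact eq_of_forall₂_le_of_countP_eq h fun _ => hp.countP_eq _

theorem perm_of_filter_ne_eq {α : Type*} [DecidableEq α] {a : α} {l₁ l₂ : List α}
    (hf : l₁.filter (· ≠ a) = l₂.filter (· ≠ a)) (hl : l₁.length = l₂.length) : l₁ ~ l₂ := by
  have hlen : ∀ l : List α, l.length = l.count a + (l.filter (· ≠ a)).length := fun l => by
    rw [count_eq_countP, ← countP_eq_length_filter, length_eq_countP_add_countP (· == a)]
    simp
  refine perm_iff_count.2 fun b => ?_
  by_cases hb : b = a
  · subst hb
    have h₁ := hlen l₁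
    rw [hf] at h₁
    have h₂ := hlen l₂
    omega
  · rw [← count_filter (p := (· ≠ a)) (by simpa using hb), hf, count_filter (by simpa using hb)]

end List

theorem IsAExt.perm {α : Type*} [DecidableEq α] {a : α} {w w' w'' : List α}
    (h' : IsAExt a w w') (h'' : IsAExt a w w'') (hlen : w'.length = w''.length) : w'.Perm w'' :=
  List.perm_of_filter_ne_eq (h'.trans h''.symm) hlen

/-- Two equal-length `a`-extensions of the same word are equal or incomparable
in the componentwise order (Corollary to Lemma 2.3). -/
theorem stmt_5 {α : Type*} [PartialOrder α] [DecidableEq α] (a : α)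
    (w w' w'' : List α)
    (h' : IsAExt a w w') (h'' : IsAExt a w w'')
    (hlen : w'.length = w''.length) :
    w' = w'' ∨ (¬ List.Forall₂ (· ≤ ·) w' w'' ∧ ¬ List.Forall₂ (· ≤ ·) w'' w') := by
  have hperm := h'.perm h'' hlen
  by_cases h₁ : List.Forall₂ (· ≤ ·) w' w''
  · exact .inl (hperm.eq_of_forall₂_le h₁)
  by_cases h₂ : List.Forall₂ (· ≤ ·) w'' w'
  · exact .inl (hperm.symm.eq_of_forall₂_le h₂).symm
  exact .inr ⟨h₁, h₂⟩
end

section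
/- Let f : A → B be a monotone map of partial orders and e ∈ A. Then the letter-wise map f* : (A\{e})* → (B\{f(e)})* (assuming f restricts to A\{e} → B\{f(e)}) is monotone with respect to the induced orders ≤_e and ≤_{f(e)}: if v ≤_e w then f*(v) ≤_{f(e)} f*(w). -/
/-! Since `f` sends only `e` to `f e`, erasing `f e` after applying `f` letter-wise is the same
as erasing `e` first; so `f*` maps `e`-extensions to `f e`-extensions, and a componentwise
comparison `v' ≤ w'` is carried to `f* v' ≤ f* w'` by monotonicity of `f`. -/

section Map

variable {α β : Type*} [DecidableEq α] [DecidableEq β] {f : α → β} {e : α}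

theorem aErase_map (hfe : ∀ x, x ≠ e → f x ≠ f e) (u : List α) :
    aErase (f e) (u.map f) = (aErase e u).map f := by
  simp only [aErase, List.filter_map]
  congr 1
  refine List.filter_congr fun x _ => ?_
  by_cases hx : x = e
  · simp [hx]
  · simp [hx, hfe x hx]

theorem IsAExt.map (hfe : ∀ x, x ≠ e → f x ≠ f e) {w w' : List α} (h : IsAExt e w w') :
    IsAExt (f e) (w.map f) (w'.map f) := by
  rw [IsAExt, aErase_map hfe, h]

theorem LeExt.map {r : α → α → Prop} {s : β → β → Prop} (hrs : ∀ a b, r a b → s (f a) (f b))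
    (hfe : ∀ x, x ≠ e → f x ≠ f e) {v w : List α} (h : LeExt r e v w) :
    LeExt s (f e) (v.map f) (w.map f) := by
  obtain ⟨v', w', hv', hw', hvw⟩ := h
  refine ⟨v'.map f, w'.map f, hv'.map hfe, hw'.map hfe, ?_⟩
  simpa only [List.forall₂_map_left_iff, List.forall₂_map_right_iff] using hvw.imp hrs

end Map

theorem stmt_10_general {α β : Type*} [PartialOrder α] [PartialOrder β]
    [DecidableEq α] [DecidableEq β]
    (f : α → β) (hf : Monotone f) (e : α)
    (hinj : ∀ x : α, x ≠ e → f x ≠ f e)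
    (v w : List α)
    (h : LeExt (· ≤ ·) e v w) :
    LeExt (· ≤ ·) (f e) (v.map f) (w.map f) :=
  h.map (fun _ _ hab => hf hab) hinj

/-- Naturality (Proposition 3.3): a monotone map of posets sending only `e` to `f e`
induces a letter-wise monotone map of the induced orders. -/
theorem stmt_10 {α β : Type*} [PartialOrder α] [PartialOrder β]
    [DecidableEq α] [DecidableEq β]
    (f : α → β) (hf : Monotone f) (e : α)
    (hinj : ∀ x : α, x ≠ e → f x ≠ f e)
    (v w : List α) (hv : e ∉ v) (hw : e ∉ w)
    (h : LeExt (· ≤ ·) e v w) :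
    LeExt (· ≤ ·) (f e) (v.map f) (w.map f) :=
  stmt_10_general f hf e hinj v w h
end
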